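/- For all L, M ∈ 𝐋, the matrix (MᵀL)_{t,t} is positive definite for every t = 1,…,T if and only if 𝐎*(L,M) = {Id}, i.e., the identity matrix is the unique optimizer. -/

import Mathlib

/-!
For orthogonal `O`, `‖L - M O‖² = ‖L - M‖² + 2 tr((1 - O)ᵀ MᵀL)`, and for block diagonal `O` the
trace splits as `∑ₜ tr((1 - Oₜ)ᵀ (MᵀL)ₜₜ)`. Hence `Id` is the unique optimizer iff for every `t`
the form `Q ↦ tr((1 - Q)ᵀ A)`, `A = (MᵀL)ₜₜ`, is positive on orthogonal `Q ≠ 1`. For positive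
definite `A` this holds since `2 tr((1 - Q)ᵀ A) = tr((1 - Q) A (1 - Q)ᵀ)`. Conversely, the
Householder reflection `1 - 2 u uᵀ / uᵀu` turns the form into a positive multiple of `uᵀ A u`,
and plane rotations through small angles force `A` to be symmetric.
-/

open Matrix Filter Topology

/-- Square matrices of size `dT × dT`, indexed by blocks: index `(t, i)` is
row/column `i` within block `t`. -/
abbrev Mat (d T : ℕ) := Matrix (Fin T × Fin d) (Fin T × Fin d) ℝ

/-- The `t`-th diagonal `d × d` block of a `dT × dT` matrix. -/
def blk {d T : ℕ} (A : Mat d T) (t : Fin T) : Matrix (Fin d) (Fin d) ℝ :=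
  fun i j => A (t, i) (t, j)

/-- The `t`-th block column of a `dT × dT` matrix, a `dT × d` matrix. -/
def colBlk {d T : ℕ} (A : Mat d T) (t : Fin T) : Matrix (Fin T × Fin d) (Fin d) ℝ :=
  fun p j => A p (t, j)

/-- Membership in `𝐋`: block lower triangular matrices. -/
def memL {d T : ℕ} (A : Mat d T) : Prop :=
  ∀ (t s : Fin T) (i j : Fin d), t < s → A (t, i) (s, j) = 0

/-- Membership in `𝐎`: block diagonal matrices with orthogonal `d × d` diagonal blocks
(equivalently: block diagonal and orthogonal). -/
def memO {d T : ℕ} (O : Mat d T) : Prop :=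
  (∀ (t s : Fin T) (i j : Fin d), t ≠ s → O (t, i) (s, j) = 0) ∧ Oᵀ * O = 1

/-- The Frobenius norm of a real matrix. -/
noncomputable def frobNorm {m n : Type*} [Fintype m] [Fintype n] (A : Matrix m n ℝ) : ℝ :=
  Real.sqrt (∑ i, ∑ j, (A i j) ^ 2)

/-- The Frobenius inner product of two real matrices. -/
noncomputable def frobInner {m n : Type*} [Fintype m] [Fintype n] (A B : Matrix m n ℝ) : ℝ :=
  ∑ i, ∑ j, A i j * B i j

/-- The adapted Bures–Wasserstein distance `d_ABW(L, M) = inf_{O ∈ 𝐎} ‖L - M O‖_F`. -/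
noncomputable def dABW {d T : ℕ} (L M : Mat d T) : ℝ :=
  sInf {r : ℝ | ∃ O : Mat d T, memO O ∧ r = frobNorm (L - M * O)}

/-- The set `𝐎*(L, M)` of optimizers of `inf_{O ∈ 𝐎} ‖L - M O‖_F`. -/
noncomputable def OStar {d T : ℕ} (L M : Mat d T) : Set (Mat d T) :=
  {O | memO O ∧ frobNorm (L - M * O) = dABW L M}

/-- The set `𝐕(L) = {M P - L : M ∈ 𝐋, P ∈ 𝐎*(L, M)}`. -/
noncomputable def VSet {d T : ℕ} (L : Mat d T) : Set (Mat d T) :=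
  {V | ∃ M P : Mat d T, memL M ∧ P ∈ OStar L M ∧ V = M * P - L}

/-- The set `𝒱(L) = {V ∈ 𝐋 : (Vᵀ L)_{t,t} is symmetric for all t}`. -/
def calV {d T : ℕ} (L : Mat d T) : Set (Mat d T) :=
  {V | memL V ∧ ∀ t : Fin T, (blk (Vᵀ * L) t).IsSymm}

/-- The set `𝐋^reg = {L ∈ 𝐋 : (Lᵀ L)_{t,t} is positive definite for all t}`. -/
def LReg {d T : ℕ} : Set (Mat d T) :=
  {L | memL L ∧ ∀ t : Fin T, (blk (Lᵀ * L) t).PosDef}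

/-- The sum of the singular values of a real square matrix `A`,
i.e. the trace of the positive semidefinite square root of `Aᵀ A`. -/
noncomputable def svSum {n : ℕ} (A : Matrix (Fin n) (Fin n) ℝ) : ℝ :=
  (((Matrix.posSemidef_conjTranspose_mul_self A).1.eigenvectorUnitary : Matrix (Fin n) (Fin n) ℝ) *
    Matrix.diagonal (Real.sqrt ∘ (Matrix.posSemidef_conjTranspose_mul_self A).1.eigenvalues) *
    (star (Matrix.posSemidef_conjTranspose_mul_self A).1.eigenvectorUnitary :
      Matrix (Fin n) (Fin n) ℝ)).trace

/-- The operator norm of a real matrix: the supremum of the euclidean norm `‖A x‖₂`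
over the euclidean unit ball. -/
noncomputable def opNorm {m n : Type*} [Fintype m] [Fintype n] (A : Matrix m n ℝ) : ℝ :=
  sSup {r : ℝ | ∃ x : n → ℝ, (∑ j, (x j) ^ 2) ≤ 1 ∧ r = Real.sqrt (∑ i, (A.mulVec x i) ^ 2)}

lemma eq_zero_of_forall_unit_circle {a D : ℝ}
    (h : ∀ c s : ℝ, c ^ 2 + s ^ 2 = 1 → 0 ≤ (1 - c) * a + s * D) : D = 0 := by
  -- on the rational parametrization of the circle the constraint is `0 ≤ a x² + D x`
  have hquad : ∀ x : ℝ, 0 ≤ a * (x * x) + D * x + 0 := by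
    intro x
    have hx : 0 < 1 + x ^ 2 := by positivity
    have := h ((1 - x ^ 2) / (1 + x ^ 2)) (2 * x / (1 + x ^ 2)) (by field_simp; ring)
    have e : (1 - (1 - x ^ 2) / (1 + x ^ 2)) * a + 2 * x / (1 + x ^ 2) * D
        = 2 * (a * (x * x) + D * x + 0) / (1 + x ^ 2) := by field_simp; ring
    rw [e] at this
    have := (div_nonneg_iff.mp this).resolve_right (fun h' => by linarith [h'.2])
    linarith [this.1]
  have := discrim_le_zero hquad
  rw [discrim] at this
  nlinarith [sq_nonneg D]

section orthogonal

variable {n : Type*} [Fintype n]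

lemma trace_mul_mul_transpose_pos {m : Type*} [Fintype m] {A : Matrix n n ℝ} (hA : A.PosDef)
    {B : Matrix m n ℝ} (hB : B ≠ 0) : 0 < trace (B * A * Bᵀ) := by
  obtain ⟨i, hi⟩ : ∃ i, B i ≠ 0 := by
    by_contra! h
    exact hB (funext h)
  have hdiag : ∀ k, (B * A * Bᵀ) k k = B k ⬝ᵥ A *ᵥ B k := fun k => by
    simp only [mul_apply, transpose_apply, dotProduct, mulVec, Finset.sum_mul, Finset.mul_sum]
    rw [Finset.sum_comm]
    exact Finset.sum_congr rfl fun _ _ => Finset.sum_congr rfl fun _ _ => by ring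
  simp only [trace, diag, hdiag]
  refine Finset.sum_pos' (fun k _ => ?_) ⟨i, Finset.mem_univ i, ?_⟩
  · simpa using hA.posSemidef.dotProduct_mulVec_nonneg (B k)
  · simpa using hA.dotProduct_mulVec_pos hi

lemma Matrix.IsSymm.trace_mul_eq_trace_transpose_mul {A : Matrix n n ℝ} (hA : A.IsSymm)
    (Q : Matrix n n ℝ) : trace (Q * A) = trace (Qᵀ * A) := by
  rw [← trace_transpose, transpose_mul, hA.eq, trace_mul_comm]

lemma trace_transpose_vecMulVec_mul (u : n → ℝ) (A : Matrix n n ℝ) :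
    trace ((vecMulVec u u)ᵀ * A) = u ⬝ᵥ A *ᵥ u := by
  rw [transpose_vecMulVec, vecMulVec_mul, trace_vecMulVec, dotProduct_comm, ← dotProduct_mulVec]

variable [DecidableEq n]

lemma Matrix.PosDef.trace_one_sub_transpose_mul_pos {A Q : Matrix n n ℝ} (hA : A.PosDef)
    (hQ : Qᵀ * Q = 1) (hQ1 : Q ≠ 1) : 0 < trace ((1 - Q)ᵀ * A) := by
  have hsymm : A.IsSymm := show Aᵀ = A by simpa [IsHermitian] using hA.isHermitian
  have key : trace ((1 - Q) * A * (1 - Q)ᵀ) = 2 * trace ((1 - Q)ᵀ * A) := by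
    rw [trace_mul_cycle, show (1 - Q)ᵀ * (1 - Q) = 1 + 1 - Q - Qᵀ by
      simp only [transpose_sub, transpose_one, sub_mul, mul_sub, one_mul, mul_one, hQ]; abel]
    simp only [transpose_sub, transpose_one, sub_mul, add_mul, trace_sub, trace_add,
      hsymm.trace_mul_eq_trace_transpose_mul Q, one_mul]
    ring
  have := trace_mul_mul_transpose_pos hA (sub_ne_zero.mpr hQ1.symm)
  linarith

/-- `householder 0 = 1`, since `2 / 0 = 0`. -/
noncomputable def householder (u : n → ℝ) : Matrix n n ℝ :=
  1 - (2 / (u ⬝ᵥ u)) • vecMulVec u u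

lemma householder_transpose_mul_self (u : n → ℝ) :
    (householder u)ᵀ * householder u = 1 := by
  set c := 2 / (u ⬝ᵥ u)
  have hcoef : c * (c * (u ⬝ᵥ u)) - 2 * c = 0 := by
    rcases eq_or_ne (u ⬝ᵥ u) 0 with h | h
    · simp [c, h]
    · rw [show c * (u ⬝ᵥ u) = 2 from div_mul_cancel₀ 2 h]; ring
  calc (householder u)ᵀ * householder u
      = 1 + (c * (c * (u ⬝ᵥ u)) - 2 * c) • vecMulVec u u := by
        simp only [householder, transpose_sub, transpose_one, transpose_smul, transpose_vecMulVec,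
          sub_mul, mul_sub, one_mul, mul_one, smul_mul_assoc, mul_smul_comm,
          vecMulVec_mul_vecMulVec, vecMulVec_smul, smul_smul]
        module
    _ = 1 := by rw [hcoef, zero_smul, add_zero]

lemma trace_one_sub_householder_transpose_mul (u : n → ℝ) (A : Matrix n n ℝ) :
    trace ((1 - householder u)ᵀ * A) = 2 / (u ⬝ᵥ u) * (u ⬝ᵥ A *ᵥ u) := by
  rw [householder, sub_sub_cancel, transpose_smul, smul_mul_assoc, trace_smul,
    trace_transpose_vecMulVec_mul, smul_eq_mul]

lemma householder_ne_one {u : n → ℝ} (hu : u ≠ 0) : householder u ≠ 1 := by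
  intro h
  have h0 := trace_one_sub_householder_transpose_mul u 1
  rw [h, sub_self, transpose_zero, zero_mul, trace_zero, one_mulVec,
    div_mul_cancel₀ _ (dotProduct_self_eq_zero.not.mpr hu)] at h0
  norm_num at h0

def planeRotation (p q : n) (c s : ℝ) : Matrix n n ℝ :=
  1 + (c - 1) • (single p p 1 + single q q 1) + s • (single q p 1 - single p q 1)

lemma planeRotation_transpose_mul_self {p q : n} (hpq : p ≠ q) {c s : ℝ}
    (hcs : c ^ 2 + s ^ 2 = 1) : (planeRotation p q c s)ᵀ * planeRotation p q c s = 1 := by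
  set P : Matrix n n ℝ := single p p 1 + single q q 1
  set K : Matrix n n ℝ := single q p 1 - single p q 1
  have hPP : P * P = P := by simp [P, add_mul, mul_add, single_mul_single_of_ne, hpq, hpq.symm]
  have hKK : K * K = -P := by
    simp [P, K, sub_mul, mul_sub, single_mul_single_of_ne, hpq, hpq.symm]; abel
  have hPK : P * K = K := by simp [P, K, add_mul, mul_sub, single_mul_single_of_ne, hpq, hpq.symm]
  have hKP : K * P = K := by
    simp [P, K, mul_add, sub_mul, single_mul_single_of_ne, hpq, hpq.symm]; abel
  have hPt : Pᵀ = P := by simp [P]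
  have hKt : Kᵀ = -K := by simp [K]
  have hR : planeRotation p q c s = 1 + (c - 1) • P + s • K := rfl
  calc (planeRotation p q c s)ᵀ * planeRotation p q c s
      = 1 + (c ^ 2 + s ^ 2 - 1) • P := by
        simp only [hR, transpose_add, transpose_smul, transpose_one, hPt, hKt,
          add_mul, mul_add, one_mul, mul_one, smul_mul_assoc, mul_smul_comm, neg_mul,
          hPP, hKK, hPK, hKP, smul_neg]
        module
    _ = 1 := by rw [hcs, sub_self, zero_smul, add_zero]

lemma trace_one_sub_planeRotation_transpose_mul (p q : n) (c s : ℝ) (A : Matrix n n ℝ) :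
    trace ((1 - planeRotation p q c s)ᵀ * A)
      = (1 - c) * (A p p + A q q) + s * (A p q - A q p) := by
  have h : (1 - planeRotation p q c s)ᵀ
      = (1 - c) • (single p p 1 + single q q 1) + s • (single q p 1 - single p q 1) := by
    simp only [planeRotation, transpose_sub, transpose_add, transpose_smul, transpose_one,
      transpose_single]
    module
  simp only [h, add_mul, sub_mul, smul_mul_assoc, trace_add, trace_sub, trace_smul,
    trace_single_mul, smul_eq_mul, one_mul]

lemma posDef_of_forall_orthogonal_ne_one {A : Matrix n n ℝ}
    (h : ∀ Q : Matrix n n ℝ, Qᵀ * Q = 1 → Q ≠ 1 → 0 < trace ((1 - Q)ᵀ * A)) : A.PosDef := by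
  have hnonneg : ∀ Q : Matrix n n ℝ, Qᵀ * Q = 1 → 0 ≤ trace ((1 - Q)ᵀ * A) := fun Q hQ => by
    rcases eq_or_ne Q 1 with rfl | hQ1
    · simp
    · exact (h Q hQ hQ1).le
  have hherm : A.IsHermitian := by
    ext p q
    rcases eq_or_ne p q with rfl | hpq
    · simp
    have := eq_zero_of_forall_unit_circle fun c s hcs => by
      rw [← trace_one_sub_planeRotation_transpose_mul q p c s A]
      exact hnonneg _ (planeRotation_transpose_mul_self hpq.symm hcs)
    simp only [conjTranspose_apply, star_trivial]
    linarith
  refine .of_dotProduct_mulVec_pos hherm fun u hu => ?_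
  have := h _ (householder_transpose_mul_self u) (householder_ne_one hu)
  rw [trace_one_sub_householder_transpose_mul] at this
  simpa using pos_of_mul_pos_right this
    (div_nonneg zero_le_two (Fintype.sum_nonneg fun i => mul_self_nonneg (u i)))

lemma posDef_iff_forall_orthogonal_ne_one {A : Matrix n n ℝ} :
    A.PosDef ↔ ∀ Q : Matrix n n ℝ, Qᵀ * Q = 1 → Q ≠ 1 → 0 < trace ((1 - Q)ᵀ * A) :=
  ⟨fun hA _ hQ hQ1 => hA.trace_one_sub_transpose_mul_pos hQ hQ1,
    posDef_of_forall_orthogonal_ne_one⟩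

end orthogonal

section blocks

variable {d T : ℕ}

def blkDiag (Q : Fin T → Matrix (Fin d) (Fin d) ℝ) : Mat d T :=
  fun p q => if p.1 = q.1 then Q p.1 p.2 q.2 else 0

@[simp]
lemma blk_blkDiag (Q : Fin T → Matrix (Fin d) (Fin d) ℝ) (t : Fin T) :
    blk (blkDiag Q) t = Q t := by
  ext i j
  simp [blk, blkDiag]

lemma blkDiag_blk {O : Mat d T}
    (hO : ∀ (t s : Fin T) (i j : Fin d), t ≠ s → O (t, i) (s, j) = 0) : blkDiag (blk O) = O := by
  ext ⟨t, i⟩ ⟨s, j⟩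
  rcases eq_or_ne t s with rfl | hts
  · simp [blkDiag, blk]
  · simp [blkDiag, hts, hO t s i j hts]

lemma blkDiag_one : blkDiag (1 : Fin T → Matrix (Fin d) (Fin d) ℝ) = 1 := by
  ext ⟨t, i⟩ ⟨s, j⟩
  rcases eq_or_ne t s with rfl | hts
  · simp [blkDiag, one_apply]
  · simp [blkDiag, hts, one_apply]

@[simp]
lemma blk_one (t : Fin T) : blk (1 : Mat d T) t = 1 := by
  rw [← blkDiag_one, blk_blkDiag, Pi.one_apply]

lemma blkDiag_sub (Q R : Fin T → Matrix (Fin d) (Fin d) ℝ) :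
    blkDiag (Q - R) = blkDiag Q - blkDiag R := by
  ext p q
  by_cases h : p.1 = q.1 <;> simp [blkDiag, h]

lemma transpose_blkDiag_mul_blkDiag (Q R : Fin T → Matrix (Fin d) (Fin d) ℝ) :
    (blkDiag Q)ᵀ * blkDiag R = blkDiag fun t => (Q t)ᵀ * R t := by
  ext ⟨t, i⟩ ⟨s, j⟩
  simp only [mul_apply, transpose_apply, blkDiag, Fintype.sum_prod_type, ite_mul, zero_mul,
    mul_ite, mul_zero]
  rcases eq_or_ne t s with rfl | hts
  · simp
  · simp [hts, hts.symm]

lemma trace_transpose_blkDiag_mul (Q : Fin T → Matrix (Fin d) (Fin d) ℝ) (A : Mat d T) :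
    trace ((blkDiag Q)ᵀ * A) = ∑ t, trace ((Q t)ᵀ * blk A t) := by
  simp only [trace, diag, mul_apply, transpose_apply, blkDiag, blk, Fintype.sum_prod_type,
    ite_mul, zero_mul]
  refine Finset.sum_congr rfl fun t _ => Finset.sum_congr rfl fun i _ => ?_
  rw [Finset.sum_comm]
  simp

lemma memO_blkDiag_iff {Q : Fin T → Matrix (Fin d) (Fin d) ℝ} :
    memO (blkDiag Q) ↔ ∀ t, (Q t)ᵀ * Q t = 1 := by
  rw [memO, transpose_blkDiag_mul_blkDiag]
  constructor
  · rintro ⟨-, h⟩ t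
    simpa using congrArg (blk · t) h
  · intro h
    refine ⟨fun t s i j hts => by simp [blkDiag, hts], ?_⟩
    rw [← blkDiag_one]
    exact congrArg blkDiag (funext h)

lemma memO_iff_exists_blkDiag {O : Mat d T} :
    memO O ↔ ∃ Q : Fin T → Matrix (Fin d) (Fin d) ℝ, (∀ t, (Q t)ᵀ * Q t = 1) ∧ blkDiag Q = O := by
  constructor
  · intro hO
    refine ⟨blk O, memO_blkDiag_iff.mp ?_, blkDiag_blk hO.1⟩
    rwa [blkDiag_blk hO.1]
  · rintro ⟨Q, hQ, rfl⟩
    exact memO_blkDiag_iff.mpr hQ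

lemma memO_one : memO (1 : Mat d T) :=
  blkDiag_one (d := d) ▸ memO_blkDiag_iff.mpr fun _ => by simp

lemma trace_one_sub_blkDiag_transpose_mul (Q : Fin T → Matrix (Fin d) (Fin d) ℝ) (A : Mat d T) :
    trace ((1 - blkDiag Q)ᵀ * A) = ∑ t, trace ((1 - Q t)ᵀ * blk A t) := by
  rw [← blkDiag_one, ← blkDiag_sub, trace_transpose_blkDiag_mul]
  rfl

lemma forall_memO_iff_forall_blk (A : Mat d T) :
    (∀ O : Mat d T, memO O → O ≠ 1 → 0 < trace ((1 - O)ᵀ * A)) ↔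
      ∀ (t : Fin T) (Q : Matrix (Fin d) (Fin d) ℝ), Qᵀ * Q = 1 → Q ≠ 1 →
        0 < trace ((1 - Q)ᵀ * blk A t) := by
  constructor
  · intro h t Q hQ hQ1
    let R : Fin T → Matrix (Fin d) (Fin d) ℝ := Function.update 1 t Q
    have hRt : R t = Q := Function.update_self ..
    have hRs : ∀ s, s ≠ t → R s = 1 := fun s hs => Function.update_of_ne hs ..
    have hO : ∀ s, (R s)ᵀ * R s = 1 := fun s => by
      rcases eq_or_ne s t with rfl | hs
      · rwa [hRt]
      · simp [hRs s hs]
    have hO1 : blkDiag R ≠ 1 := fun h1 => hQ1 (by simpa [hRt] using congrArg (blk · t) h1)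
    have := h _ (memO_blkDiag_iff.mpr hO) hO1
    rwa [trace_one_sub_blkDiag_transpose_mul,
      Finset.sum_eq_single t (fun s _ hs => by simp [hRs s hs]) (by simp), hRt] at this
  · intro h O hO hO1
    obtain ⟨Q, hQ, rfl⟩ := memO_iff_exists_blkDiag.mp hO
    obtain ⟨t, ht⟩ : ∃ t, Q t ≠ 1 := by
      by_contra! hQ1
      exact hO1 (by rw [← blkDiag_one]; exact congrArg blkDiag (funext hQ1))
    rw [trace_one_sub_blkDiag_transpose_mul]
    refine Finset.sum_pos' (fun s _ => ?_) ⟨t, Finset.mem_univ t, h t _ (hQ t) ht⟩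
    rcases eq_or_ne (Q s) 1 with hs | hs
    · simp [hs]
    · exact (h s _ (hQ s) hs).le

end blocks

section frobenius

variable {m n : Type*} [Fintype m] [Fintype n]

lemma frobNorm_nonneg (X : Matrix m n ℝ) : 0 ≤ frobNorm X :=
  Real.sqrt_nonneg _

lemma frobNorm_sq (X : Matrix m n ℝ) : frobNorm X ^ 2 = trace (Xᵀ * X) := by
  rw [frobNorm, Real.sq_sqrt (by positivity), trace, Finset.sum_comm]
  simp [mul_apply, sq]

lemma frobNorm_sub_mul_sq [DecidableEq n] (L M : Matrix m n ℝ) {O : Matrix n n ℝ}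
    (hO : Oᵀ * O = 1) :
    frobNorm (L - M * O) ^ 2 = frobNorm (L - M) ^ 2 + 2 * trace ((1 - O)ᵀ * (Mᵀ * L)) := by
  have expand : ∀ Y : Matrix m n ℝ,
      trace ((L - Y)ᵀ * (L - Y)) = trace (Lᵀ * L) - 2 * trace (Yᵀ * L) + trace (Yᵀ * Y) := by
    intro Y
    simp only [transpose_sub, Matrix.sub_mul, Matrix.mul_sub, trace_sub]
    rw [show trace (Lᵀ * Y) = trace (Yᵀ * L) by rw [← trace_transpose, transpose_mul,
      transpose_transpose]]
    ring
  have hMO : trace ((M * O)ᵀ * (M * O)) = trace (Mᵀ * M) := by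
    rw [transpose_mul, Matrix.mul_assoc, ← Matrix.mul_assoc Mᵀ, trace_mul_comm, Matrix.mul_assoc,
      mul_eq_one_comm.mp hO, Matrix.mul_one]
  rw [frobNorm_sq, frobNorm_sq, expand, expand, hMO, transpose_mul, Matrix.mul_assoc,
    transpose_sub, transpose_one, sub_mul, Matrix.one_mul, trace_sub]
  ring

lemma frobNorm_sub_lt_frobNorm_sub_mul_iff [DecidableEq n] (L M : Matrix m n ℝ)
    {O : Matrix n n ℝ} (hO : Oᵀ * O = 1) :
    frobNorm (L - M) < frobNorm (L - M * O) ↔ 0 < trace ((1 - O)ᵀ * (Mᵀ * L)) := by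
  rw [← pow_lt_pow_iff_left₀ (frobNorm_nonneg _) (frobNorm_nonneg _) two_ne_zero,
    frobNorm_sub_mul_sq L M hO]
  constructor <;> intro h <;> linarith

end frobenius

lemma setOf_eq_sInf_eq_singleton_iff {α : Type*} {p : α → Prop} {f : α → ℝ}
    (hf : BddBelow {r | ∃ y, p y ∧ r = f y}) {x : α} (hx : p x) :
    {y | p y ∧ f y = sInf {r | ∃ y, p y ∧ r = f y}} = {x} ↔ ∀ y, p y → y ≠ x → f x < f y := by
  have hle : ∀ y, p y → sInf {r | ∃ y, p y ∧ r = f y} ≤ f y :=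
    fun y hy => csInf_le hf ⟨y, hy, rfl⟩
  constructor
  · intro h y hy hyx
    have hfx : f x = sInf {r | ∃ y, p y ∧ r = f y} := (h.ge (Set.mem_singleton x)).2
    refine (hfx ▸ hle y hy).lt_of_ne fun heq => hyx ?_
    exact (h.le ⟨hy, heq.symm.trans hfx⟩ : y ∈ ({x} : Set α))
  · intro h
    have hmin : sInf {r | ∃ y, p y ∧ r = f y} = f x := by
      refine le_antisymm (hle x hx) (le_csInf ⟨f x, x, hx, rfl⟩ ?_)
      rintro _ ⟨y, hy, rfl⟩
      rcases eq_or_ne y x with rfl | hyx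
      · exact le_rfl
      · exact (h y hy hyx).le
    ext y
    simp only [Set.mem_ofPred_eq, Set.mem_singleton_iff, hmin]
    constructor
    · rintro ⟨hy, heq⟩
      by_contra hyx
      exact (h y hy hyx).ne' heq
    · rintro rfl
      exact ⟨hx, rfl⟩

lemma oStar_eq_singleton_one_iff {d T : ℕ} (L M : Mat d T) :
    OStar L M = {1} ↔
      ∀ O : Mat d T, memO O → O ≠ 1 → frobNorm (L - M) < frobNorm (L - M * O) := by
  have := setOf_eq_sInf_eq_singleton_iff (f := fun O => frobNorm (L - M * O))
    ⟨0, by rintro _ ⟨O, -, rfl⟩; exact frobNorm_nonneg _⟩ memO_one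
  rw [OStar, dABW]
  simpa only [mul_one] using this

theorem stmt8_general (d T : ℕ) (L M : Mat d T) :
    (∀ t : Fin T, (blk (Mᵀ * L) t).PosDef) ↔ OStar L M = {(1 : Mat d T)} := by
  simp_rw [posDef_iff_forall_orthogonal_ne_one, ← forall_memO_iff_forall_blk,
    oStar_eq_singleton_one_iff]
  exact forall₂_congr fun O hO => imp_congr_right fun _ =>
    (frobNorm_sub_lt_frobNorm_sub_mul_iff L M hO.2).symm

/-- `(MᵀL)_{t,t}` is positive definite for every `t` iff the identity is the
unique optimizer, `𝐎*(L,M) = {Id}`. -/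
theorem stmt8 (d T : ℕ) (hd : 0 < d) (hT : 0 < T) (L M : Mat d T)
    (hL : memL L) (hM : memL M) :
    (∀ t : Fin T, (blk (Mᵀ * L) t).PosDef) ↔ OStar L M = {(1 : Mat d T)} :=
  stmt8_general d T L M
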